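/- arXiv:1208.0737 — 2 statements merged into one kernel-verified Lean document; each statement's English description precedes it below -/
import Mathlib

section
/- The map f: ℝ² → S³×S³, f(s,t) = (cos s + i sin s, cos t + i sin t), is an almost complex immersion: J f_s = (2/√3) f_t + (1/√3) f_s′ where explicitly J f_s = (1/√3)(sin s − i cos s, 2(sin t − i cos t)), so the tangent plane span{f_s, f_t} is invariant under J; moreover P f_s = f_t, and g(f_s,f_s) = g(f_t,f_t) = 4/3, g(f_s,f_t) = −2/3. -/
noncomputable section

/-- The almost complex structure `J` of the nearly Kähler `S³ × S³` at the point `(p, q)`. -/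
def NKJ (p q : Quaternion ℝ) (Z : Quaternion ℝ × Quaternion ℝ) :
    Quaternion ℝ × Quaternion ℝ :=
  ((Real.sqrt 3)⁻¹ • ((2 : ℝ) • (p * q⁻¹ * Z.2) - Z.1),
   (Real.sqrt 3)⁻¹ • (-((2 : ℝ) • (q * p⁻¹ * Z.1)) + Z.2))

/-- The almost product structure `P` at `(p, q)`: `P(U,V) = (pq⁻¹V, qp⁻¹U)`. -/
def NKP (p q : Quaternion ℝ) (Z : Quaternion ℝ × Quaternion ℝ) :
    Quaternion ℝ × Quaternion ℝ :=
  (p * q⁻¹ * Z.2, q * p⁻¹ * Z.1)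

/-- The nearly Kähler metric of `S³ × S³` at `(p, q)` (explicit formula). -/
def NKg (p q : Quaternion ℝ) (Z Z' : Quaternion ℝ × Quaternion ℝ) : ℝ :=
  (4 / 3 : ℝ) * ((inner ℝ Z.1 Z'.1 : ℝ) + (inner ℝ Z.2 Z'.2 : ℝ))
    - (2 / 3 : ℝ) * ((inner ℝ (p⁻¹ * Z.1) (q⁻¹ * Z'.2) : ℝ)
      + (inner ℝ (p⁻¹ * Z'.1) (q⁻¹ * Z.2) : ℝ))

/-- The flat totally geodesic example `f(s,t) = (cos s + i sin s, cos t + i sin t)`. -/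
def NKf (z : ℝ × ℝ) : Quaternion ℝ × Quaternion ℝ :=
  ((⟨Real.cos z.1, Real.sin z.1, 0, 0⟩ : Quaternion ℝ),
   (⟨Real.cos z.2, Real.sin z.2, 0, 0⟩ : Quaternion ℝ))

/-! At `f(s,t) = (p, q)` the partial derivatives are `f_s = (p i, 0)` and `f_t = (0, q i)`.
On vectors of the form `(p u, 0)` and `(0, q u)` the factors `q p⁻¹` and `p q⁻¹` in `J` and `P`
merely exchange the left factors `p` and `q`, so `J` maps the plane spanned by these two vectors
to itself and `P` swaps them; the values of `g` reduce to `|p i| = |q i| = |i| = 1`. -/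

open Quaternion
open scoped RealInnerProductSpace

theorem HasDerivAt.fderiv_prodMap_apply {E F : Type*} [NormedAddCommGroup E] [NormedSpace ℝ E]
    [NormedAddCommGroup F] [NormedSpace ℝ F] {γ : ℝ → E} {δ : ℝ → F} {γ' : E} {δ' : F}
    {z : ℝ × ℝ} (hγ : HasDerivAt γ γ' z.1) (hδ : HasDerivAt δ δ' z.2) (v : ℝ × ℝ) :
    fderiv ℝ (Prod.map γ δ) z v = (v.1 • γ', v.2 • δ') := by
  rw [(hγ.hasFDerivAt.prodMap z hδ.hasFDerivAt).fderiv]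
  rfl

section NearlyKahlerTensors

variable {p q : ℍ}

theorem NKJ_mul_left_inl (hp : p ≠ 0) (u : ℍ) :
    NKJ p q (p * u, 0) = ((√3)⁻¹ • -(p * u), (√3)⁻¹ • (2 : ℝ) • -(q * u)) := by
  have hqp : q * p⁻¹ * (p * u) = q * u := by rw [mul_assoc, inv_mul_cancel_left₀ hp]
  ext1 <;> simp [NKJ, hqp]

theorem NKJ_mul_left_inr (hq : q ≠ 0) (u : ℍ) :
    NKJ p q (0, q * u) = ((√3)⁻¹ • (2 : ℝ) • (p * u), (√3)⁻¹ • (q * u)) := by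
  have hpq : p * q⁻¹ * (q * u) = p * u := by rw [mul_assoc, inv_mul_cancel_left₀ hq]
  ext1 <;> simp [NKJ, hpq]

theorem NKJ_mul_left_inl_mem_span (hp : p ≠ 0) (u : ℍ) :
    NKJ p q (p * u, 0) ∈ Submodule.span ℝ {(p * u, 0), (0, q * u)} := by
  rw [NKJ_mul_left_inl hp, Submodule.mem_span_pair]
  exact ⟨-(√3)⁻¹, -(√3)⁻¹ * 2, Prod.ext (by simp) (by simp [mul_smul])⟩

theorem NKJ_mul_left_inr_mem_span (hq : q ≠ 0) (u : ℍ) :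
    NKJ p q (0, q * u) ∈ Submodule.span ℝ {(p * u, 0), (0, q * u)} := by
  rw [NKJ_mul_left_inr hq, Submodule.mem_span_pair]
  exact ⟨(√3)⁻¹ * 2, (√3)⁻¹, Prod.ext (by simp [mul_smul]) (by simp)⟩

theorem NKP_mul_left_inl (hp : p ≠ 0) (u : ℍ) : NKP p q (p * u, 0) = (0, q * u) := by
  simp [NKP, mul_assoc, inv_mul_cancel_left₀ hp]

theorem NKg_inl_inl (x y : ℍ) : NKg p q (x, 0) (y, 0) = 4 / 3 * ⟪x, y⟫ := by
  simp [NKg]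

theorem NKg_inr_inr (x y : ℍ) : NKg p q (0, x) (0, y) = 4 / 3 * ⟪x, y⟫ := by
  simp [NKg]

theorem NKg_mul_left_inl_inr (hp : p ≠ 0) (hq : q ≠ 0) (u v : ℍ) :
    NKg p q (p * u, 0) (0, q * v) = -(2 / 3) * ⟪u, v⟫ := by
  simp [NKg, inv_mul_cancel_left₀ hp, inv_mul_cancel_left₀ hq]

end NearlyKahlerTensors

def circleQ (s : ℝ) : ℍ := ⟨Real.cos s, Real.sin s, 0, 0⟩

theorem normSq_circleQ (s : ℝ) : normSq (circleQ s) = 1 := by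
  rw [normSq_def']
  simp [circleQ]

theorem circleQ_ne_zero (s : ℝ) : circleQ s ≠ 0 := by
  intro h
  simpa [h] using normSq_circleQ s

theorem normSq_coe_I : normSq (Complex.I : ℍ) = 1 := by
  simp [normSq_def']

theorem normSq_circleQ_mul_I (s : ℝ) : normSq (circleQ s * (Complex.I : ℍ)) = 1 := by
  rw [map_mul, normSq_circleQ, normSq_coe_I, one_mul]

theorem neg_circleQ_mul_I (s : ℝ) :
    -(circleQ s * (Complex.I : ℍ)) = ⟨Real.sin s, -Real.cos s, 0, 0⟩ := by
  ext <;> simp <;> simp [circleQ]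

theorem hasDerivAt_circleQ (s : ℝ) : HasDerivAt circleQ (circleQ s * (Complex.I : ℍ)) s := by
  have hcomp : circleQ = fun s ↦ Real.cos s • (1 : ℍ) + Real.sin s • (Complex.I : ℍ) := by
    funext s; ext <;> simp [circleQ]
  rw [hcomp]
  refine (((Real.hasDerivAt_cos s).smul_const (1 : ℍ)).fun_add
    ((Real.hasDerivAt_sin s).smul_const (Complex.I : ℍ))).congr_deriv ?_
  ext <;> simp

theorem NKf_apply (z : ℝ × ℝ) : NKf z = (circleQ z.1, circleQ z.2) := rfl

theorem fderiv_NKf_apply (z v : ℝ × ℝ) :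
    fderiv ℝ NKf z v =
      (v.1 • (circleQ z.1 * (Complex.I : ℍ)), v.2 • (circleQ z.2 * (Complex.I : ℍ))) :=
  (hasDerivAt_circleQ z.1).fderiv_prodMap_apply (hasDerivAt_circleQ z.2) v

/-- `f(s,t) = (cos s + i sin s, cos t + i sin t)` is an almost complex
immersion: `J f_s = (1/√3)(sin s − i cos s, 2(sin t − i cos t))`, the tangent plane
`span{f_s, f_t}` is `J`-invariant, `P f_s = f_t`, and
`g(f_s,f_s) = g(f_t,f_t) = 4/3`, `g(f_s,f_t) = −2/3`. -/
theorem NK_example_flat (z : ℝ × ℝ)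
    (fs ft : Quaternion ℝ × Quaternion ℝ)
    (hfs : fs = fderiv ℝ NKf z (1, 0)) (hft : ft = fderiv ℝ NKf z (0, 1)) :
    NKJ (NKf z).1 (NKf z).2 fs
        = ((Real.sqrt 3)⁻¹ • (⟨Real.sin z.1, -Real.cos z.1, 0, 0⟩ : Quaternion ℝ),
           (Real.sqrt 3)⁻¹ • ((2 : ℝ) • (⟨Real.sin z.2, -Real.cos z.2, 0, 0⟩ : Quaternion ℝ))) ∧
    NKJ (NKf z).1 (NKf z).2 fs ∈ Submodule.span ℝ {fs, ft} ∧
    NKJ (NKf z).1 (NKf z).2 ft ∈ Submodule.span ℝ {fs, ft} ∧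
    NKP (NKf z).1 (NKf z).2 fs = ft ∧
    NKg (NKf z).1 (NKf z).2 fs fs = 4 / 3 ∧
    NKg (NKf z).1 (NKf z).2 ft ft = 4 / 3 ∧
    NKg (NKf z).1 (NKf z).2 fs ft = -(2 / 3) := by
  obtain rfl : fs = (circleQ z.1 * (Complex.I : ℍ), 0) := by simp [hfs, fderiv_NKf_apply]
  obtain rfl : ft = (0, circleQ z.2 * (Complex.I : ℍ)) := by simp [hft, fderiv_NKf_apply]
  rw [NKf_apply]
  have hp := circleQ_ne_zero z.1
  have hq := circleQ_ne_zero z.2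
  refine ⟨?_, NKJ_mul_left_inl_mem_span hp _, NKJ_mul_left_inr_mem_span hq _,
    NKP_mul_left_inl hp _, ?_, ?_, ?_⟩
  · rw [NKJ_mul_left_inl hp, neg_circleQ_mul_I, neg_circleQ_mul_I]
    -- the literals of the statement are typed in `QuaternionAlgebra`, so only `rfl` sees through
    rfl
  · rw [NKg_inl_inl, inner_self, normSq_circleQ_mul_I]
    norm_num
  · rw [NKg_inr_inr, inner_self, normSq_circleQ_mul_I]
    norm_num
  · rw [NKg_mul_left_inl_inr hp hq, inner_self, normSq_coe_I, mul_one]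
end
end

section
/- For the immersion f: S² → S³×S³, f(x) = ½(1 − √3 x, 1 + √3 x) with x an imaginary unit quaternion, and for any tangent vector w to S² at x (i.e., imaginary quaternion w with ⟨w,x⟩ = 0), the differential df(w) = (√3/2)(−w, w) is tangent to S³×S³ at f(x), the tangent plane df(T_xS²) is invariant under J (namely J df(w) = df(xw)), and P maps df(T_xS²) into its g-orthogonal complement: g(P df(w), df(w')) = 0 for all tangent w, w'. -/
noncomputable section

/-- Differential of `f(x) = ½(1 − √3 x, 1 + √3 x)` applied to a tangent vector `w` of `S²`:
`df(w) = (√3/2)(−w, w)`. -/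
def NKdf (w : Quaternion ℝ) : Quaternion ℝ × Quaternion ℝ :=
  ((Real.sqrt 3 / 2) • (-w), (Real.sqrt 3 / 2) • w)

/-!
With `x² = -1`, the points `p = ½(1 - √3 x)` and `q = ½(1 + √3 x)` are the primitive sixth roots
of unity `e^{∓πx/3}` of the plane `ℝ[x] ≅ ℂ`: `pq = 1`, `p² = -q`, `q² = -p`, `p + q = 1`, and
`|p| = |q| = 1` because `x` is imaginary. Hence `pq⁻¹ = -q` and `qp⁻¹ = -p`, so `J df(w) = df(xw)`
comes down to `q - ½ = (√3/2) x`, and `g(P df(w), df(w'))` becomes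
`⟨(p + q) w, w'⟩ - ½(⟨pw, pw'⟩ + ⟨qw, qw'⟩)` up to a factor, which vanishes since left
multiplication by a unit quaternion is an isometry. Tangency is `⟨w, a + b x⟩ = a Re w + b ⟨w, x⟩`.
-/

open Quaternion RealInnerProductSpace

/-- The immersion is `f(x) = (sixthRoot (-x), sixthRoot x)`. -/
def sixthRoot {A : Type*} [Ring A] [Algebra ℝ A] (x : A) : A :=
  (2 : ℝ)⁻¹ • (1 + Real.sqrt 3 • x)

section SixthRoot

variable {A : Type*}

section Ring

variable [Ring A] [Algebra ℝ A] {x : A}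

lemma sixthRoot_add_sixthRoot_neg (x : A) : sixthRoot x + sixthRoot (-x) = 1 := by
  unfold sixthRoot; module

lemma sixthRoot_mul_sixthRoot_neg (hx : x * x = -1) : sixthRoot x * sixthRoot (-x) = 1 := by
  unfold sixthRoot
  simp only [mul_add, add_mul, mul_smul_comm, smul_mul_assoc, one_mul, mul_one, mul_neg, hx,
    smul_neg]
  match_scalars <;> nlinarith [Real.mul_self_sqrt (show (0 : ℝ) ≤ 3 by norm_num)]

lemma sixthRoot_mul_self (hx : x * x = -1) : sixthRoot x * sixthRoot x = -sixthRoot (-x) := by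
  unfold sixthRoot
  simp only [mul_add, add_mul, mul_smul_comm, smul_mul_assoc, one_mul, mul_one, hx]
  match_scalars <;> nlinarith [Real.mul_self_sqrt (show (0 : ℝ) ≤ 3 by norm_num)]

end Ring

lemma inv_sixthRoot [DivisionRing A] [Algebra ℝ A] {x : A} (hx : x * x = -1) :
    (sixthRoot x)⁻¹ = sixthRoot (-x) :=
  inv_eq_of_mul_eq_one_right (sixthRoot_mul_sixthRoot_neg hx)

end SixthRoot

namespace Quaternion

lemma mul_self_eq_neg_one {x : ℍ[ℝ]} (hx : x.re = 0) (hxn : ‖x‖ = 1) : x * x = -1 := by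
  rw [← sq, sq_eq_neg_normSq.mpr hx, normSq_eq_norm_mul_self, hxn]; simp

lemma inner_mul_mul_left (a b c : ℍ[ℝ]) : ⟪a * b, a * c⟫ = ‖a‖ ^ 2 * ⟪b, c⟫ := by
  simp only [real_inner_eq_norm_add_mul_self_sub_norm_mul_self_sub_norm_mul_self_div_two,
    ← mul_add, norm_mul]
  ring

lemma inner_one_right (w : ℍ[ℝ]) : ⟪w, 1⟫ = w.re := by
  simp [inner_def]

lemma star_sixthRoot {x : ℍ[ℝ]} (hx : star x = -x) : star (sixthRoot x) = sixthRoot (-x) := by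
  simp [sixthRoot, Quaternion.star_smul, hx]

lemma norm_sixthRoot {x : ℍ[ℝ]} (hxx : x * x = -1) (hx : star x = -x) : ‖sixthRoot x‖ = 1 := by
  have h : ‖sixthRoot x‖ * ‖sixthRoot x‖ = 1 := by
    rw [← normSq_eq_norm_mul_self, ← coe_inj, ← self_mul_star, star_sixthRoot hx,
      sixthRoot_mul_sixthRoot_neg hxx, coe_one]
  nlinarith [norm_nonneg (sixthRoot x)]

lemma inner_sixthRoot_eq_zero {w x : ℍ[ℝ]} (hw : w.re = 0) (hwx : ⟪w, x⟫ = 0) :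
    ⟪w, sixthRoot x⟫ = 0 := by
  simp [sixthRoot, inner_add_right, inner_smul_right, inner_one_right, hw, hwx]

end Quaternion

section NearlyKahler

variable {x : ℍ[ℝ]}

lemma NKJ_NKdf (hxx : x * x = -1) (w : ℍ[ℝ]) :
    NKJ (sixthRoot (-x)) (sixthRoot x) (NKdf w) = NKdf (x * w) := by
  have hxx' : -x * -x = -1 := by rw [neg_mul_neg, hxx]
  simp only [NKJ, NKdf, inv_sixthRoot hxx, inv_sixthRoot hxx', neg_neg, sixthRoot_mul_self hxx,
    sixthRoot_mul_self hxx']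
  refine Prod.ext ?_ ?_ <;>
    simp only [sixthRoot, smul_mul_assoc, mul_smul_comm, add_mul, one_mul, neg_mul, mul_neg,
      smul_neg, smul_add] <;>
    match_scalars <;> field_simp <;> ring

lemma NKg_NKP_NKdf (hxx : x * x = -1) (hsx : star x = -x) (w w' : ℍ[ℝ]) :
    NKg (sixthRoot (-x)) (sixthRoot x) (NKP (sixthRoot (-x)) (sixthRoot x) (NKdf w)) (NKdf w') =
      0 := by
  have hxx' : -x * -x = -1 := by rw [neg_mul_neg, hxx]
  simp only [NKg, NKP, NKdf, inv_sixthRoot hxx, inv_sixthRoot hxx', neg_neg,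
    sixthRoot_mul_self hxx, sixthRoot_mul_self hxx', mul_smul_comm, ← mul_assoc, neg_mul, mul_neg,
    real_inner_smul_left, real_inner_smul_right, inner_neg_left, inner_neg_right]
  have hsum : ⟪sixthRoot x * w, w'⟫ + ⟪sixthRoot (-x) * w, w'⟫ = ⟪w, w'⟫ := by
    rw [← inner_add_left, ← add_mul, sixthRoot_add_sixthRoot_neg, one_mul]
  rw [inner_mul_mul_left, inner_mul_mul_left, norm_sixthRoot hxx hsx,
    norm_sixthRoot hxx' (by rw [star_neg, hsx]), real_inner_comm w]
  linear_combination 4 / 3 * (√3 / 2 * (√3 / 2)) * hsum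

end NearlyKahler

theorem NK_example_sphere_general (x w w' : Quaternion ℝ)
    (hx : x.re = 0) (hxn : ‖x‖ = 1)
    (hw : w.re = 0) (hwx : (inner ℝ w x : ℝ) = 0)
    (p q : Quaternion ℝ)
    (hp : p = (2 : ℝ)⁻¹ • ((1 : Quaternion ℝ) - Real.sqrt 3 • x))
    (hq : q = (2 : ℝ)⁻¹ • ((1 : Quaternion ℝ) + Real.sqrt 3 • x)) :
    (inner ℝ (NKdf w).1 p : ℝ) = 0 ∧ (inner ℝ (NKdf w).2 q : ℝ) = 0 ∧
    NKJ p q (NKdf w) = NKdf (x * w) ∧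
    NKg p q (NKP p q (NKdf w)) (NKdf w') = 0 := by
  have hxx : x * x = -1 := mul_self_eq_neg_one hx hxn
  have hp' : p = sixthRoot (-x) := by rw [hp, sixthRoot, smul_neg, sub_eq_add_neg]
  have hq' : q = sixthRoot x := hq
  subst hp' hq'
  refine ⟨?_, ?_, NKJ_NKdf hxx w, NKg_NKP_NKdf hxx (star_eq_neg.mpr hx) w w'⟩
  · rw [NKdf, real_inner_smul_left, inner_neg_left,
      inner_sixthRoot_eq_zero hw (by rw [inner_neg_right, hwx, neg_zero]), neg_zero, mul_zero]
  · rw [NKdf, real_inner_smul_left, inner_sixthRoot_eq_zero hw hwx, mul_zero]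

/-- for `f : S² → S³×S³`, `f(x) = ½(1 − √3 x, 1 + √3 x)` (with `x` an
imaginary unit quaternion) and any tangent vectors `w, w'` of `S²` at `x`, the vector
`df(w) = (√3/2)(−w, w)` is tangent to `S³×S³` at `f(x)`, the tangent plane is
`J`-invariant — indeed `J df(w) = df(xw)` — and `P` maps the tangent plane into its
`g`-orthogonal complement: `g(P df(w), df(w')) = 0`. -/
theorem NK_example_sphere (x w w' : Quaternion ℝ)
    (hx : x.re = 0) (hxn : ‖x‖ = 1)
    (hw : w.re = 0) (hwx : (inner ℝ w x : ℝ) = 0)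
    (hw' : w'.re = 0) (hw'x : (inner ℝ w' x : ℝ) = 0)
    (p q : Quaternion ℝ)
    (hp : p = (2 : ℝ)⁻¹ • ((1 : Quaternion ℝ) - Real.sqrt 3 • x))
    (hq : q = (2 : ℝ)⁻¹ • ((1 : Quaternion ℝ) + Real.sqrt 3 • x)) :
    (inner ℝ (NKdf w).1 p : ℝ) = 0 ∧ (inner ℝ (NKdf w).2 q : ℝ) = 0 ∧
    NKJ p q (NKdf w) = NKdf (x * w) ∧
    NKg p q (NKP p q (NKdf w)) (NKdf w') = 0 :=
  NK_example_sphere_general x w w' hx hxn hw hwx p q hp hq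
end
end
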